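/- arXiv:2406.07181 — 6 statements merged into one kernel-verified Lean document; each statement's English description precedes it below -/
import Mathlib

section
/- For all real x, |tanh(x) - x| ≤ |x · tanh(x)^2|. -/
/-! Both sides are odd in `x`, so take `x ≥ 0`. Then `tanh x ≤ x`, since `sinh x ≤ x cosh x`
(the difference has derivative `x sinh x ≥ 0`), and multiplying `x - tanh x ≤ x tanh² x`
by `cosh² x` turns it into `x ≤ sinh x cosh x = sinh (2x) / 2`. -/

open Real

theorem Real.sinh_le_mul_cosh {x : ℝ} (hx : 0 ≤ x) : sinh x ≤ x * cosh x := by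
  have hmono : MonotoneOn (fun t ↦ t * cosh t - sinh t) (Set.Ici 0) := by
    refine monotoneOn_of_deriv_nonneg (convex_Ici 0) (by fun_prop) (by fun_prop) fun t ht ↦ ?_
    rw [interior_Ici, Set.mem_Ioi] at ht
    have hderiv : deriv (fun t ↦ t * cosh t - sinh t) t = t * sinh t := by
      simp [deriv_fun_sub, deriv_fun_mul]
    rw [hderiv]
    exact mul_nonneg ht.le (sinh_nonneg_iff.2 ht.le)
  simpa using hmono (Set.mem_Ici.2 le_rfl) hx hx

theorem Real.tanh_le_self {x : ℝ} (hx : 0 ≤ x) : tanh x ≤ x := by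
  rw [tanh_eq_sinh_div_cosh, div_le_iff₀ (cosh_pos x)]
  exact sinh_le_mul_cosh hx

theorem Real.self_sub_tanh_le_mul_tanh_sq {x : ℝ} (hx : 0 ≤ x) : x - tanh x ≤ x * tanh x ^ 2 := by
  have h2x : 2 * x ≤ 2 * sinh x * cosh x := sinh_two_mul x ▸ self_le_sinh_iff.2 (by linarith)
  have hc := cosh_pos x
  rw [tanh_eq_sinh_div_cosh]
  field_simp
  nlinarith [cosh_sq x]

theorem Real.abs_tanh_sub_self_le_of_nonneg {x : ℝ} (hx : 0 ≤ x) :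
    |tanh x - x| ≤ |x * tanh x ^ 2| := by
  rw [abs_of_nonpos (sub_nonpos.2 (tanh_le_self hx)), abs_of_nonneg (by positivity), neg_sub]
  exact self_sub_tanh_le_mul_tanh_sq hx

theorem abs_tanh_sub_self_le (x : ℝ) :
    |Real.tanh x - x| ≤ |x * Real.tanh x ^ 2| := by
  rcases le_total 0 x with hx | hx
  · exact abs_tanh_sub_self_le_of_nonneg hx
  · have h := abs_tanh_sub_self_le_of_nonneg (neg_nonneg.2 hx)
    rwa [tanh_neg, neg_sub_neg, abs_sub_comm, neg_sq, neg_mul, abs_neg] at h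
end

section
/- For all y in the open interval (-π/2, π/2), |tan(y) - y| ≤ |y^2 · tan(y)|. -/
/-!
For `0 ≤ y < π / 2` both sides are nonnegative, and after multiplying by `cos y > 0` the claim
becomes `sin y * (1 - y ^ 2) ≤ y * cos y`. For `y ≤ 1` this follows from `sin y ≤ y` and
`1 - y ^ 2 / 2 ≤ cos y`; for `y > 1` the left side is nonpositive. Both sides are even in `y`.
-/

namespace Real

variable {y : ℝ}

lemma sin_mul_one_sub_sq_le_mul_cos (h0 : 0 ≤ y) (hy : y ≤ π / 2) :
    sin y * (1 - y ^ 2) ≤ y * cos y := by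
  rcases le_or_gt y 1 with h1 | h1
  · calc sin y * (1 - y ^ 2) ≤ y * (1 - y ^ 2) :=
          mul_le_mul_of_nonneg_right (sin_le h0) (by nlinarith)
      _ ≤ y * (1 - y ^ 2 / 2) := by gcongr; linarith [sq_nonneg y]
      _ ≤ y * cos y := by gcongr; exact one_sub_sq_div_two_le_cos
  · calc sin y * (1 - y ^ 2) ≤ 0 :=
          mul_nonpos_of_nonneg_of_nonpos
            (sin_nonneg_of_nonneg_of_le_pi h0 (by linarith [pi_pos])) (by nlinarith)
      _ ≤ y * cos y := mul_nonneg h0 (cos_nonneg_of_mem_Icc ⟨by linarith [pi_pos], hy⟩)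

lemma tan_sub_self_le_sq_mul_tan (h0 : 0 ≤ y) (hy : y < π / 2) :
    tan y - y ≤ y ^ 2 * tan y := by
  have hcos : 0 < cos y := cos_pos_of_mem_Ioo ⟨by linarith [pi_pos], hy⟩
  rw [tan_eq_sin_div_cos, div_sub' hcos.ne', mul_div_assoc', div_le_div_iff_of_pos_right hcos]
  linarith [sin_mul_one_sub_sq_le_mul_cos h0 hy.le]

lemma abs_tan_sub_self_le_of_nonneg (h0 : 0 ≤ y) (hy : y < π / 2) :
    |tan y - y| ≤ |y ^ 2 * tan y| := by
  rw [abs_of_nonneg (sub_nonneg.2 (le_tan h0 hy)),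
    abs_of_nonneg (mul_nonneg (sq_nonneg y) (tan_nonneg_of_nonneg_of_le_pi_div_two h0 hy.le))]
  exact tan_sub_self_le_sq_mul_tan h0 hy

end Real

open Real in
theorem abs_tan_sub_self_le (y : ℝ) (hy : y ∈ Set.Ioo (-(π / 2)) (π / 2)) :
    |Real.tan y - y| ≤ |y ^ 2 * Real.tan y| := by
  rcases le_total 0 y with h0 | h0
  · exact abs_tan_sub_self_le_of_nonneg h0 hy.2
  · calc |tan y - y| = |tan (-y) - -y| := by rw [tan_neg, ← neg_sub', abs_neg]
      _ ≤ |(-y) ^ 2 * tan (-y)| :=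
          abs_tan_sub_self_le_of_nonneg (neg_nonneg.2 h0) (by linarith [hy.1])
      _ = |y ^ 2 * tan y| := by rw [neg_sq, tan_neg, mul_neg, abs_neg]
end

section
/- For all real x and y, |(x - tanh x) - (y - tanh y)| ≤ (x^2 + y^2) · |x - y|. -/
/-! The derivative of `t ↦ t - tanh t` is `tanh² t ≤ t²`, and between `x` and `y` we have
`t² ≤ x² + y²`, so the mean value inequality gives the bound. -/

open Set

namespace Real

theorem hasDerivAt_tanh (x : ℝ) : HasDerivAt tanh (1 - tanh x ^ 2) x := by
  have hcosh : cosh x ≠ 0 := (cosh_pos x).ne'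
  rw [show tanh = sinh / cosh from funext tanh_eq_sinh_div_cosh]
  refine ((hasDerivAt_sinh x).div (hasDerivAt_cosh x) hcosh).congr_deriv ?_
  rw [Pi.div_apply]
  field_simp

theorem lipschitzWith_tanh : LipschitzWith 1 tanh := by
  refine lipschitzWith_of_nnnorm_deriv_le (fun x => (hasDerivAt_tanh x).differentiableAt)
    fun x => ?_
  rw [(hasDerivAt_tanh x).deriv, ← NNReal.coe_le_coe, coe_nnnorm, norm_eq_abs, NNReal.coe_one,
    abs_of_nonneg (sub_nonneg.2 (tanh_sq_lt_one x).le)]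
  exact sub_le_self _ (sq_nonneg _)

theorem abs_tanh_le_abs (x : ℝ) : |tanh x| ≤ |x| := by
  simpa [tanh_zero] using lipschitzWith_tanh.dist_le_mul x 0

theorem hasDerivAt_id_sub_tanh (x : ℝ) :
    HasDerivAt (fun t => t - tanh t) (tanh x ^ 2) x :=
  ((hasDerivAt_id' x).sub (hasDerivAt_tanh x)).congr_deriv (by ring)

end Real

theorem sq_le_sq_add_sq_of_mem_uIcc {R : Type*} [CommRing R] [LinearOrder R]
    [IsStrictOrderedRing R] {a b c : R} (hc : c ∈ uIcc a b) : c ^ 2 ≤ a ^ 2 + b ^ 2 := by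
  have hmax : |c| ≤ max |a| |b| := by
    rcases mem_uIcc.1 hc with ⟨hac, hcb⟩ | ⟨hbc, hca⟩
    · exact abs_le_max_abs_abs hac hcb
    · exact max_comm |b| |a| ▸ abs_le_max_abs_abs hbc hca
  calc c ^ 2 = |c| ^ 2 := (sq_abs c).symm
    _ ≤ max |a| |b| ^ 2 := pow_le_pow_left₀ (abs_nonneg c) hmax 2
    _ ≤ a ^ 2 + b ^ 2 := by
      rcases max_choice |a| |b| with h | h <;> rw [h, sq_abs] <;>
        linarith [sq_nonneg a, sq_nonneg b]

theorem abs_sub_tanh_lipschitz_quadratic (x y : ℝ) :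
    |(x - Real.tanh x) - (y - Real.tanh y)| ≤ (x ^ 2 + y ^ 2) * |x - y| := by
  have hbound : ∀ c ∈ uIcc x y, ‖Real.tanh c ^ 2‖ ≤ x ^ 2 + y ^ 2 := fun c hc => by
    rw [Real.norm_of_nonneg (sq_nonneg _)]
    exact (sq_le_sq.2 (Real.abs_tanh_le_abs c)).trans (sq_le_sq_add_sq_of_mem_uIcc hc)
  simpa [Real.norm_eq_abs] using (convex_uIcc x y).norm_image_sub_le_of_norm_hasDerivWithin_le
    (fun c _ => (Real.hasDerivAt_id_sub_tanh c).hasDerivWithinAt) hbound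
    right_mem_uIcc left_mem_uIcc
end

section
/- For all s with 0 < |s| < π and ℓ ∈ {1, 2}, |1/tan(s/2)^ℓ - 1/(s/2)^ℓ| ≤ 2·|s|^{2-ℓ}. -/
open Real in
private lemma key_cot (x : ℝ) (hx : 0 < x) (hx2 : x < π / 2) :
    0 < 1 / Real.tan x ∧ 1 / Real.tan x ≤ 1 / x ∧ 1 / x - 1 / Real.tan x ≤ x := by
  have htan : 0 < Real.tan x := Real.tan_pos_of_pos_of_lt_pi_div_two hx hx2
  have hlt : x < Real.tan x := Real.lt_tan hx hx2
  have hsin : 0 < Real.sin x := Real.sin_pos_of_pos_of_lt_pi hx (hx2.trans (by linarith [Real.pi_pos]))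
  have hcos : 0 < Real.cos x := Real.cos_pos_of_mem_Ioo ⟨by linarith, hx2⟩
  refine ⟨by positivity, by gcongr, ?_⟩
  -- need (1 - x^2) * sin x ≤ x * cos x
  have hxx : (1 - x ^ 2) * Real.sin x ≤ x * Real.cos x := by
    rcases le_or_gt 1 x with h1 | h1
    · nlinarith [mul_pos hx hcos, mul_nonneg (show (0:ℝ) ≤ x ^ 2 - 1 by nlinarith) hsin.le]
    · have hsl : Real.sin x < x := Real.sin_lt hx
      have hcl : 1 - x ^ 2 / 2 < Real.cos x := Real.one_sub_sq_div_two_lt_cos (ne_of_gt hx)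
      nlinarith
  have htan_eq : Real.tan x = Real.sin x / Real.cos x := Real.tan_eq_sin_div_cos x
  have hmain : 1 / x - Real.cos x / Real.sin x ≤ x := by
    rw [div_sub_div _ _ (ne_of_gt hx) (ne_of_gt hsin), div_le_iff₀ (by positivity)]
    nlinarith
  rw [htan_eq, one_div_div]
  exact hmain

open Real in
private lemma aux_pos (s : ℝ) (h0 : 0 < s) (hπ : s < π) (ℓ : ℕ) (hℓ : ℓ = 1 ∨ ℓ = 2) :
    |1 / Real.tan (s / 2) ^ ℓ - 1 / (s / 2) ^ ℓ| ≤ 2 * |s| ^ ((2 : ℝ) - ℓ) := by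
  set x := s / 2 with hxdef
  have hx : 0 < x := by positivity
  have hx2 : x < π / 2 := by simp [hxdef]; linarith
  obtain ⟨hc0, hc1, hc2⟩ := key_cot x hx hx2
  have habs : |s| = 2 * x := by rw [abs_of_pos h0]; simp [hxdef]; ring
  rcases hℓ with rfl | rfl
  · simp only [pow_one]
    have h2 : ((2 : ℝ) - (1 : ℕ)) = 1 := by norm_num
    rw [h2, Real.rpow_one, habs, abs_sub_comm, abs_of_nonneg (by linarith)]
    linarith
  · have h2 : ((2 : ℝ) - (2 : ℕ)) = 0 := by norm_num
    rw [h2, Real.rpow_zero, mul_one]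
    have ht2 : 1 / Real.tan x ^ 2 ≤ 1 / x ^ 2 := by
      have := mul_le_mul hc1 hc1 (le_of_lt hc0) (by positivity)
      calc 1 / Real.tan x ^ 2 = (1 / Real.tan x) * (1 / Real.tan x) := by ring
        _ ≤ (1 / x) * (1 / x) := this
        _ = 1 / x ^ 2 := by ring
    rw [abs_sub_comm, abs_of_nonneg (by linarith)]
    have heq : 1 / x ^ 2 - 1 / Real.tan x ^ 2
        = (1 / x - 1 / Real.tan x) * (1 / x + 1 / Real.tan x) := by ring
    rw [heq]
    have h2x : (2:ℝ) / x = 1 / x + 1 / x := by ring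
    have hb : (1 / x - 1 / Real.tan x) * (1 / x + 1 / Real.tan x) ≤ x * (2 / x) := by
      apply mul_le_mul hc2 (by rw [h2x]; linarith) (by positivity) (le_of_lt hx)
    calc (1 / x - 1 / Real.tan x) * (1 / x + 1 / Real.tan x) ≤ x * (2 / x) := hb
      _ = 2 := by field_simp

open Real in
theorem abs_inv_tan_pow_sub_inv_pow_le (s : ℝ) (hs0 : 0 < |s|) (hsπ : |s| < π)
    (ℓ : ℕ) (hℓ : ℓ = 1 ∨ ℓ = 2) :
    |1 / Real.tan (s / 2) ^ ℓ - 1 / (s / 2) ^ ℓ| ≤ 2 * |s| ^ ((2 : ℝ) - ℓ) := by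
  rcases lt_trichotomy s 0 with hneg | rfl | hpos
  · have h0 : 0 < -s := by linarith
    have hπ : -s < π := by rwa [abs_of_neg hneg] at hsπ
    have := aux_pos (-s) h0 hπ ℓ hℓ
    have heq : |1 / Real.tan (s / 2) ^ ℓ - 1 / (s / 2) ^ ℓ|
        = |1 / Real.tan (-s / 2) ^ ℓ - 1 / (-s / 2) ^ ℓ| := by
      have : (-s) / 2 = -(s / 2) := by ring
      rw [this, Real.tan_neg]
      rcases hℓ with rfl | rfl
      · rw [show 1 / (-Real.tan (s / 2)) ^ 1 - 1 / (-(s / 2)) ^ 1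
            = -(1 / Real.tan (s / 2) ^ 1 - 1 / (s / 2) ^ 1) from by ring, abs_neg]
      · simp [neg_pow]
    rw [abs_neg] at this
    rw [heq]
    exact this
  · simp at hs0
  · exact aux_pos s hpos (by rwa [abs_of_pos hpos] at hsπ) ℓ hℓ
end

section
/- Suppose 𝗏 : ℝ² → ℝ² and 𝗊 : ℝ² → ℝ are bounded, 𝗊 is harmonic on ℝ², 𝗏 satisfies μΔ𝗏 = ∇𝗊 on ℝ² for some μ > 0, and (𝗏, 𝗊)(x₁, x₂) → (±c₁, 0, ±c₂) as x₂ → ±∞ for some constants c₁, c₂. Then 𝗊 = 0, 𝗏 = 0, and c₁ = c₂ = 0. -/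
/-!
Under `(x₁, x₂) ↦ x₁ + i x₂` the equation `∂₁²f + ∂₂²f = 0` says that `f` is harmonic on `ℂ`,
so a bounded solution is constant by Liouville's theorem for harmonic functions. For `q` the
opposite limits `±c₂` along a vertical line then force `q = 0` and `c₂ = 0`. Hence `μΔv = ∇q = 0`,
and the same argument applies to each component of `v`, whose limits are `±c₁` and `0`.
-/

open Real Filter

/-- First partial derivative. -/
noncomputable def pd1 (f : ℝ × ℝ → ℝ) (x : ℝ × ℝ) : ℝ :=
  deriv (fun t => f (t, x.2)) x.1

/-- Second partial derivative. -/
noncomputable def pd2 (f : ℝ × ℝ → ℝ) (x : ℝ × ℝ) : ℝ :=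
  deriv (fun t => f (x.1, t)) x.2

open Laplacian InnerProductSpace

lemma pd1_eq_fderiv {f : ℝ × ℝ → ℝ} {x : ℝ × ℝ} (hf : DifferentiableAt ℝ f x) :
    pd1 f x = fderiv ℝ f x (1, 0) :=
  (hf.hasFDerivAt.comp_hasDerivAt x.1 ((hasDerivAt_id x.1).prodMk (hasDerivAt_const x.1 x.2))).deriv

lemma pd2_eq_fderiv {f : ℝ × ℝ → ℝ} {x : ℝ × ℝ} (hf : DifferentiableAt ℝ f x) :
    pd2 f x = fderiv ℝ f x (0, 1) :=
  (hf.hasFDerivAt.comp_hasDerivAt x.2 ((hasDerivAt_const x.2 x.1).prodMk (hasDerivAt_id x.2))).deriv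

lemma pd1_pd1_eq_iteratedFDeriv {f : ℝ × ℝ → ℝ} (hf : ContDiff ℝ 2 f) (x : ℝ × ℝ) :
    pd1 (pd1 f) x = iteratedFDeriv ℝ 2 f x ![(1, 0), (1, 0)] := by
  have hdd : Differentiable ℝ (fderiv ℝ f) := (hf.fderiv_right le_rfl).differentiable one_ne_zero
  have hpd1 : pd1 f = fun y => fderiv ℝ f y (1, 0) :=
    funext fun y => pd1_eq_fderiv (hf.differentiable (by norm_num) y)
  rw [hpd1, pd1_eq_fderiv ((hdd x).clm_apply (differentiableAt_const _)),
    fderiv_clm_apply (hdd x) (differentiableAt_const _)]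
  simp [iteratedFDeriv_two_apply]

lemma pd2_pd2_eq_iteratedFDeriv {f : ℝ × ℝ → ℝ} (hf : ContDiff ℝ 2 f) (x : ℝ × ℝ) :
    pd2 (pd2 f) x = iteratedFDeriv ℝ 2 f x ![(0, 1), (0, 1)] := by
  have hdd : Differentiable ℝ (fderiv ℝ f) := (hf.fderiv_right le_rfl).differentiable one_ne_zero
  have hpd2 : pd2 f = fun y => fderiv ℝ f y (0, 1) :=
    funext fun y => pd2_eq_fderiv (hf.differentiable (by norm_num) y)
  rw [hpd2, pd2_eq_fderiv ((hdd x).clm_apply (differentiableAt_const _)),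
    fderiv_clm_apply (hdd x) (differentiableAt_const _)]
  simp [iteratedFDeriv_two_apply]

lemma laplacian_comp_equivRealProdCLM {f : ℝ × ℝ → ℝ} (hf : ContDiff ℝ 2 f) (z : ℂ) :
    Δ (f ∘ Complex.equivRealProdCLM) z =
      pd1 (pd1 f) (z.re, z.im) + pd2 (pd2 f) (z.re, z.im) := by
  have hcomp :=
    Complex.equivRealProdCLM.toContinuousLinearMap.iteratedFDeriv_comp_right hf z le_rfl
  have h1 : (fun i => Complex.equivRealProdCLM (![1, 1] i)) = ![(1, 0), (1, 0)] := by
    ext i <;> fin_cases i <;> simp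
  have hI :
      (fun i => Complex.equivRealProdCLM (![Complex.I, Complex.I] i)) = ![(0, 1), (0, 1)] := by
    ext i <;> fin_cases i <;> simp
  rw [laplacian_eq_iteratedFDeriv_complexPlane, pd1_pd1_eq_iteratedFDeriv hf,
    pd2_pd2_eq_iteratedFDeriv hf]
  dsimp only
  rw [← ContinuousLinearEquiv.coe_coe, hcomp,
    ContinuousMultilinearMap.compContinuousLinearMap_apply,
    ContinuousMultilinearMap.compContinuousLinearMap_apply]
  exact congrArg₂ _ (congrArg _ h1) (congrArg _ hI)

lemma harmonicOnNhd_comp_equivRealProdCLM {f : ℝ × ℝ → ℝ} (hf : ContDiff ℝ 2 f)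
    (hΔ : ∀ x, pd1 (pd1 f) x + pd2 (pd2 f) x = 0) :
    HarmonicOnNhd (f ∘ Complex.equivRealProdCLM) Set.univ := fun _ _ =>
  ⟨(hf.comp Complex.equivRealProdCLM.contDiff).contDiffAt,
    Eventually.of_forall fun z => (laplacian_comp_equivRealProdCLM hf z).trans (hΔ _)⟩

theorem apply_eq_apply_of_bounded_of_harmonic {f : ℝ × ℝ → ℝ} (hf : ContDiff ℝ 2 f)
    (hbdd : ∃ M, ∀ x, |f x| ≤ M) (hΔ : ∀ x, pd1 (pd1 f) x + pd2 (pd2 f) x = 0) (x y : ℝ × ℝ) :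
    f x = f y := by
  obtain ⟨M, hM⟩ := hbdd
  have hrange : Bornology.IsBounded (Set.range (f ∘ Complex.equivRealProdCLM)) := by
    rw [EquivLike.range_comp]
    exact isBounded_iff_forall_norm_le.2 ⟨M, Set.forall_mem_range.2 hM⟩
  simpa using bounded_harmonic_on_complex_plane_is_constant _
    (harmonicOnNhd_comp_equivRealProdCLM hf hΔ) hrange
    (Complex.equivRealProdCLM.symm x) (Complex.equivRealProdCLM.symm y)

theorem eq_zero_of_bounded_of_harmonic_of_tendsto_neg {f : ℝ × ℝ → ℝ} (hf : ContDiff ℝ 2 f)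
    (hbdd : ∃ M, ∀ x, |f x| ≤ M) (hΔ : ∀ x, pd1 (pd1 f) x + pd2 (pd2 f) x = 0) {c : ℝ} (x₁ : ℝ)
    (htop : Tendsto (fun t => f (x₁, t)) atTop (nhds c))
    (hbot : Tendsto (fun t => f (x₁, t)) atBot (nhds (-c))) :
    f = 0 ∧ c = 0 := by
  have hconst (x : ℝ × ℝ) : f x = f 0 := apply_eq_apply_of_bounded_of_harmonic hf hbdd hΔ x 0
  simp only [hconst, tendsto_const_nhds_iff] at htop hbot
  exact ⟨funext fun x => by rw [hconst, Pi.zero_apply]; linarith, by linarith⟩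

/-- Uniqueness for the two-phase Stokes problem: if `v, q` are bounded, `q` is harmonic,
`μΔv = ∇q` on `ℝ²`, and `(v, q)` tends to `(±c₁, 0, ±c₂)` as `x₂ → ±∞`,
then `q = 0`, `v = 0` and `c₁ = c₂ = 0`. -/
theorem stokes_uniqueness
    (v : ℝ × ℝ → ℝ × ℝ) (q : ℝ × ℝ → ℝ) (μ c₁ c₂ : ℝ) (hμ : 0 < μ)
    (hv_smooth : ContDiff ℝ 2 v) (hq_smooth : ContDiff ℝ 2 q)
    (hv_bdd : ∃ M : ℝ, ∀ x, ‖v x‖ ≤ M) (hq_bdd : ∃ M : ℝ, ∀ x, |q x| ≤ M)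
    (hq_harm : ∀ x : ℝ × ℝ, pd1 (pd1 q) x + pd2 (pd2 q) x = 0)
    (hstokes₁ : ∀ x : ℝ × ℝ,
      μ * (pd1 (pd1 (fun y => (v y).1)) x + pd2 (pd2 (fun y => (v y).1)) x) = pd1 q x)
    (hstokes₂ : ∀ x : ℝ × ℝ,
      μ * (pd1 (pd1 (fun y => (v y).2)) x + pd2 (pd2 (fun y => (v y).2)) x) = pd2 q x)
    (hlim_top : ∀ x₁ : ℝ,
      Tendsto (fun x₂ : ℝ => ((v (x₁, x₂)).1, (v (x₁, x₂)).2, q (x₁, x₂))) atTop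
        (nhds (c₁, 0, c₂)))
    (hlim_bot : ∀ x₁ : ℝ,
      Tendsto (fun x₂ : ℝ => ((v (x₁, x₂)).1, (v (x₁, x₂)).2, q (x₁, x₂))) atBot
        (nhds (-c₁, 0, -c₂))) :
    q = 0 ∧ v = 0 ∧ c₁ = 0 ∧ c₂ = 0 := by
  obtain ⟨rfl, rfl⟩ : q = 0 ∧ c₂ = 0 := eq_zero_of_bounded_of_harmonic_of_tendsto_neg
    hq_smooth hq_bdd hq_harm 0 (hlim_top 0).snd_nhds.snd_nhds (hlim_bot 0).snd_nhds.snd_nhds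
  obtain ⟨M, hM⟩ := hv_bdd
  obtain ⟨hv₁, rfl⟩ := eq_zero_of_bounded_of_harmonic_of_tendsto_neg hv_smooth.fst
    ⟨M, fun x => (norm_fst_le (v x)).trans (hM x)⟩
    (fun x => by simpa [pd1, hμ.ne'] using hstokes₁ x)
    0 (hlim_top 0).fst_nhds (hlim_bot 0).fst_nhds
  obtain ⟨hv₂, -⟩ := eq_zero_of_bounded_of_harmonic_of_tendsto_neg (c := 0) hv_smooth.snd
    ⟨M, fun x => (norm_snd_le (v x)).trans (hM x)⟩
    (fun x => by simpa [pd2, hμ.ne'] using hstokes₂ x)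
    0 (hlim_top 0).snd_nhds.fst_nhds (by simpa using (hlim_bot 0).snd_nhds.fst_nhds)
  exact ⟨rfl, funext fun x => Prod.ext (congrFun hv₁ x) (congrFun hv₂ x), rfl, rfl⟩
end

section
/- Let σ, Θ ∈ ℝ with σ > 0 and μ > 0, and consider the operator A on the space Ĥ of 2π-periodic functions with zero mean, acting on Fourier modes e^{ikξ} (k ∈ ℤ, k ≠ 0) by A e^{ikξ} = -((σk² + Θ)/(4μ|k|)) e^{ikξ}. Then the spectrum of A (as an operator from Ĥ^r to Ĥ^{r-1}) is the closure of the set { -(σk² + Θ)/(4μk) : k ∈ ℕ, k ≥ 1 }, and if σ + Θ > 0 then every spectral value λ satisfies Re λ ≤ -ϑ₀, where ϑ₀ = (σ+Θ)/(4μ) if σ ≥ Θ and ϑ₀ = √(σΘ)/(2μ) if σ < Θ. -/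
open Real

/-- The eigenvalue of the linearization at the flat interface on the Fourier mode `e^{ikξ}`. -/
noncomputable def eigenvalue (σ Θ μ : ℝ) (k : {k : ℤ // k ≠ 0}) : ℝ :=
  -((σ * ((k.1 : ℝ)) ^ 2 + Θ) / (4 * μ * |(k.1 : ℝ)|))

/-- The periodic Sobolev space `Ĥ^s` of order `s` with zero mean, modelled as the set of
Fourier-coefficient sequences over the nonzero modes with `Σ |k|^{2s} |f_k|² < ∞`. -/
def zeroMeanSobolev (s : ℝ) : Set ({k : ℤ // k ≠ 0} → ℂ) :=
  {f | Summable fun k : {k : ℤ // k ≠ 0} => |(k.1 : ℝ)| ^ (2 * s) * ‖f k‖ ^ 2}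

/-- The map `λ - A` on Fourier-coefficient sequences, where `A` acts diagonally with
eigenvalues `-(σk² + Θ)/(4μ|k|)`. -/
noncomputable def resolventMap (σ Θ μ : ℝ) (z : ℂ) (f : {k : ℤ // k ≠ 0} → ℂ) :
    {k : ℤ // k ≠ 0} → ℂ :=
  fun k => (z - (eigenvalue σ Θ μ k : ℂ)) * f k

/-- The spectrum of `A : Ĥ^r → Ĥ^{r-1}`: those `λ ∈ ℂ` for which `λ - A` fails to be a
bijection from `Ĥ^r` onto `Ĥ^{r-1}`. -/
noncomputable def spectrumSet (σ Θ μ r : ℝ) : Set ℂ :=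
  {z : ℂ | ¬ Set.BijOn (resolventMap σ Θ μ z) (zeroMeanSobolev r) (zeroMeanSobolev (r - 1))}

/-!
`λ - A` is the diagonal multiplier `k ↦ λ - λₖ` with `λₖ = -(σk² + Θ)/(4μ|k|)`. Since `|λₖ|` grows
linearly in `|k|`, the eigenvalues accumulate only at infinity, so their set is closed; for `λ`
off that set, `|λ - λₖ|` is comparable to `|k|` from above and below, and multiplication by
`λ - λₖ` is then a bijection `Ĥ^r → Ĥ^{r-1}`. At `λ = λₖ` the Fourier mode `e^{ikξ}` lies in the
kernel. The bound on `Re λ` is the estimate `(σa² + Θ)/(4μa) ≥ ϑ₀` for `a ≥ 1`, which is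
`(a - 1)(σa - Θ) ≥ 0` when `Θ ≤ σ` and AM–GM otherwise.
-/

open Filter Set

lemma isClosed_range_of_tendsto_cofinite_cocompact {X Y : Type*} [TopologicalSpace X]
    [DiscreteTopology X] [TopologicalSpace Y] [T2Space Y] [CompactlyCoherentSpace Y] {f : X → Y}
    (hf : Tendsto f cofinite (cocompact Y)) : IsClosed (range f) :=
  (isProperMap_iff_tendsto_cocompact.2
    ⟨continuous_of_discreteTopology, by rwa [cocompact_eq_cofinite]⟩).isClosed_range

lemma mul_div_add_le_of_le_of_sub_le {ε α β a d : ℝ} (hε : 0 < ε) (hβ : 0 ≤ β)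
    (h₁ : ε ≤ d) (h₂ : α * a - β ≤ d) : ε * α / (ε + β) * a ≤ d := by
  -- `(ε + β) d = β d + ε d ≥ β ε + ε (α a - β)`
  rw [div_mul_eq_mul_div, div_le_iff₀ (by positivity)]
  nlinarith

lemma one_le_abs_val_cast (k : {k : ℤ // k ≠ 0}) : 1 ≤ |(k.1 : ℝ)| := by
  exact_mod_cast Int.one_le_abs k.2

lemma mul_mem_zeroMeanSobolev {m : {k : ℤ // k ≠ 0} → ℂ} {C s r : ℝ}
    (hm : ∀ k, ‖m k‖ ≤ C * |(k.1 : ℝ)| ^ s) {f : {k : ℤ // k ≠ 0} → ℂ}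
    (hf : f ∈ zeroMeanSobolev r) : (fun k => m k * f k) ∈ zeroMeanSobolev (r - s) := by
  refine Summable.of_nonneg_of_le (fun k => by positivity) (fun k => ?_) (hf.mul_left (C ^ 2))
  set a := |(k.1 : ℝ)|
  have ha : 0 < a := one_pos.trans_le (one_le_abs_val_cast k)
  have hm2 : ‖m k‖ ^ 2 ≤ C ^ 2 * a ^ (2 * s) := by
    calc ‖m k‖ ^ 2 ≤ (C * a ^ s) ^ 2 := pow_le_pow_left₀ (norm_nonneg _) (hm k) 2
      _ = C ^ 2 * a ^ (2 * s) := by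
        rw [mul_pow, ← rpow_mul_natCast ha.le, mul_comm s]; norm_num
  have hsplit : a ^ (2 * r) = a ^ (2 * (r - s)) * a ^ (2 * s) := by
    rw [← rpow_add ha]; ring_nf
  calc a ^ (2 * (r - s)) * ‖m k * f k‖ ^ 2 = a ^ (2 * (r - s)) * ‖m k‖ ^ 2 * ‖f k‖ ^ 2 := by
        rw [norm_mul, mul_pow, mul_assoc]
    _ ≤ a ^ (2 * (r - s)) * (C ^ 2 * a ^ (2 * s)) * ‖f k‖ ^ 2 := by gcongr
    _ = C ^ 2 * (a ^ (2 * r) * ‖f k‖ ^ 2) := by rw [hsplit]; ring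

lemma bijOn_mul_zeroMeanSobolev {m : {k : ℤ // k ≠ 0} → ℂ} {c C : ℝ} (hc : 0 < c)
    (hlow : ∀ k, c * |(k.1 : ℝ)| ≤ ‖m k‖) (hup : ∀ k, ‖m k‖ ≤ C * |(k.1 : ℝ)|) (r : ℝ) :
    BijOn (fun f k => m k * f k) (zeroMeanSobolev r) (zeroMeanSobolev (r - 1)) := by
  have hm : ∀ k, m k ≠ 0 := fun k =>
    norm_pos_iff.1 ((mul_pos hc (one_pos.trans_le (one_le_abs_val_cast k))).trans_le (hlow k))
  refine ⟨fun f hf => mul_mem_zeroMeanSobolev (fun k => by simpa using hup k) hf,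
    fun f _ g _ hfg => funext fun k => mul_left_cancel₀ (hm k) (congrFun hfg k),
    fun g hg => ⟨fun k => (m k)⁻¹ * g k, ?_, funext fun k => mul_inv_cancel_left₀ (hm k) _⟩⟩
  have hinv : ∀ k, ‖(m k)⁻¹‖ ≤ c⁻¹ * |(k.1 : ℝ)| ^ (-1 : ℝ) := fun k => by
    have ha : 0 < |(k.1 : ℝ)| := one_pos.trans_le (one_le_abs_val_cast k)
    rw [norm_inv, rpow_neg_one, ← mul_inv]
    exact inv_anti₀ (by positivity) (hlow k)
  simpa using mul_mem_zeroMeanSobolev hinv hg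

lemma not_injOn_mul_zeroMeanSobolev {m : {k : ℤ // k ≠ 0} → ℂ} {k₀ : {k : ℤ // k ≠ 0}}
    (hk₀ : m k₀ = 0) (r : ℝ) : ¬ InjOn (fun f k => m k * f k) (zeroMeanSobolev r) := by
  intro hinj
  have hδ : Pi.single k₀ 1 ∈ zeroMeanSobolev r :=
    summable_of_ne_finset_zero (s := {k₀}) fun k hk => by
      simp [Finset.mem_singleton.not.1 hk]
  have h0 : (0 : {k : ℤ // k ≠ 0} → ℂ) ∈ zeroMeanSobolev r := by
    simp [zeroMeanSobolev]
  have := congrFun (hinj hδ h0 (funext fun k => by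
    by_cases hk : k = k₀ <;> simp [hk, hk₀])) k₀
  simp at this

/-- `ϑ₀` of the paper. -/
noncomputable def decayThreshold (σ Θ μ : ℝ) : ℝ :=
  if Θ ≤ σ then (σ + Θ) / (4 * μ) else √(σ * Θ) / (2 * μ)

noncomputable def decayRate (σ Θ μ a : ℝ) : ℝ := (σ * a ^ 2 + Θ) / (4 * μ * a)

section decayRate

variable {σ Θ μ a : ℝ}

lemma eigenvalue_eq_neg_decayRate (k : {k : ℤ // k ≠ 0}) :
    eigenvalue σ Θ μ k = -decayRate σ Θ μ |(k.1 : ℝ)| := by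
  rw [eigenvalue, decayRate, sq_abs]

lemma sub_le_decayRate (hμ : 0 < μ) (ha : 1 ≤ a) :
    σ / (4 * μ) * a - |Θ| / (4 * μ) ≤ decayRate σ Θ μ a := by
  have ha₀ : 0 < a := one_pos.trans_le ha
  have hdiff : decayRate σ Θ μ a - (σ / (4 * μ) * a - |Θ| / (4 * μ)) =
      (Θ + |Θ| * a) / (4 * μ * a) := by
    rw [decayRate]; field_simp; ring
  have hnum : 0 ≤ Θ + |Θ| * a := by
    nlinarith [neg_abs_le Θ, mul_le_mul_of_nonneg_left ha (abs_nonneg Θ)]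
  linarith [div_nonneg hnum (by positivity : (0 : ℝ) ≤ 4 * μ * a)]

lemma abs_decayRate_le (hμ : 0 < μ) (ha : 1 ≤ a) :
    |decayRate σ Θ μ a| ≤ (|σ| + |Θ|) / (4 * μ) * a := by
  have ha₀ : 0 < a := one_pos.trans_le ha
  rw [decayRate, abs_div, abs_of_pos (by positivity : 0 < 4 * μ * a), div_le_iff₀ (by positivity)]
  calc |σ * a ^ 2 + Θ| ≤ |σ| * a ^ 2 + |Θ| * a ^ 2 := by
        refine (abs_add_le _ _).trans (add_le_add (by rw [abs_mul, abs_sq]) ?_)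
        nlinarith [abs_nonneg Θ, mul_le_mul_of_nonneg_left ha (abs_nonneg Θ)]
    _ = (|σ| + |Θ|) / (4 * μ) * a * (4 * μ * a) := by field_simp

lemma decayThreshold_le_decayRate (hσ : 0 ≤ σ) (hμ : 0 < μ) (ha : 1 ≤ a) :
    decayThreshold σ Θ μ ≤ decayRate σ Θ μ a := by
  have ha₀ : 0 < a := one_pos.trans_le ha
  rw [decayThreshold, decayRate]
  split_ifs with hΘ
  · rw [div_le_div_iff₀ (by positivity) (by positivity)]
    have hσa : Θ ≤ σ * a := hΘ.trans (le_mul_of_one_le_right hσ ha)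
    nlinarith [mul_nonneg (sub_nonneg.2 ha) (sub_nonneg.2 hσa)]
  · have hΘ₀ : 0 ≤ Θ := hσ.trans (not_le.1 hΘ).le
    have amgm : 2 * √(σ * Θ) * a ≤ σ * a ^ 2 + Θ := by
      nlinarith [sq_nonneg (√σ * a - √Θ), sq_sqrt hσ, sq_sqrt hΘ₀, sqrt_mul hσ Θ]
    rw [div_le_div_iff₀ (by positivity) (by positivity)]
    nlinarith

end decayRate

section spectrum

variable {σ Θ μ : ℝ}

lemma affine_le_norm_sub_eigenvalue (hμ : 0 < μ) (z : ℂ) (k : {k : ℤ // k ≠ 0}) :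
    σ / (4 * μ) * |(k.1 : ℝ)| - (|Θ| / (4 * μ) + ‖z‖) ≤ ‖z - eigenvalue σ Θ μ k‖ :=
  calc _ ≤ decayRate σ Θ μ |(k.1 : ℝ)| - ‖z‖ := by
        linarith [sub_le_decayRate (σ := σ) (Θ := Θ) hμ (one_le_abs_val_cast k)]
    _ ≤ ‖(eigenvalue σ Θ μ k : ℂ)‖ - ‖z‖ := by
        rw [Complex.norm_real, Real.norm_eq_abs, eigenvalue_eq_neg_decayRate, abs_neg]
        exact sub_le_sub_right (le_abs_self _) _
    _ ≤ ‖z - eigenvalue σ Θ μ k‖ := by rw [norm_sub_rev]; exact norm_sub_norm_le _ _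

lemma norm_sub_eigenvalue_le (hμ : 0 < μ) (z : ℂ) (k : {k : ℤ // k ≠ 0}) :
    ‖z - eigenvalue σ Θ μ k‖ ≤ (‖z‖ + (|σ| + |Θ|) / (4 * μ)) * |(k.1 : ℝ)| := by
  have hk := one_le_abs_val_cast k
  have he := abs_decayRate_le (σ := σ) (Θ := Θ) hμ hk
  rw [← abs_neg, ← eigenvalue_eq_neg_decayRate] at he
  calc ‖z - eigenvalue σ Θ μ k‖ ≤ ‖z‖ + |eigenvalue σ Θ μ k| := by
        simpa only [Complex.norm_real, Real.norm_eq_abs] using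
          norm_sub_le z (eigenvalue σ Θ μ k : ℂ)
    _ ≤ _ := by nlinarith [norm_nonneg z]

lemma tendsto_eigenvalue_cofinite_cocompact (hσ : 0 < σ) (hμ : 0 < μ) :
    Tendsto (fun k => (eigenvalue σ Θ μ k : ℂ)) cofinite (cocompact ℂ) := by
  have habs : Tendsto (fun k : {k : ℤ // k ≠ 0} => |(k.1 : ℝ)|) cofinite atTop :=
    tendsto_norm_cocompact_atTop.comp
      (Int.tendsto_coe_cofinite.comp Subtype.val_injective.tendsto_cofinite)
  have hlin := tendsto_atTop_add_const_right _ (-(|Θ| / (4 * μ) + ‖(0 : ℂ)‖))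
    (habs.const_mul_atTop (by positivity : 0 < σ / (4 * μ)))
  refine tendsto_cocompact_of_tendsto_dist_comp_atTop 0 (tendsto_atTop_mono (fun k => ?_) hlin)
  rw [dist_eq_norm, norm_sub_rev, ← sub_eq_add_neg]
  exact affine_le_norm_sub_eigenvalue hμ 0 k

lemma isClosed_range_eigenvalue (hσ : 0 < σ) (hμ : 0 < μ) :
    IsClosed (range fun k => (eigenvalue σ Θ μ k : ℂ)) :=
  isClosed_range_of_tendsto_cofinite_cocompact (tendsto_eigenvalue_cofinite_cocompact hσ hμ)

lemma exists_mul_abs_le_norm_sub_eigenvalue (hσ : 0 < σ) (hμ : 0 < μ) {z : ℂ} {ε : ℝ}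
    (hε : 0 < ε) (hfar : ∀ k, ε ≤ ‖z - eigenvalue σ Θ μ k‖) :
    ∃ c > 0, ∀ k, c * |(k.1 : ℝ)| ≤ ‖z - eigenvalue σ Θ μ k‖ :=
  ⟨ε * (σ / (4 * μ)) / (ε + (|Θ| / (4 * μ) + ‖z‖)), by positivity, fun k =>
    mul_div_add_le_of_le_of_sub_le hε (by positivity) (hfar k)
      (affine_le_norm_sub_eigenvalue hμ z k)⟩

lemma bijOn_resolventMap (hσ : 0 < σ) (hμ : 0 < μ) {z : ℂ}
    (hz : z ∉ range fun k => (eigenvalue σ Θ μ k : ℂ)) (r : ℝ) :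
    BijOn (resolventMap σ Θ μ z) (zeroMeanSobolev r) (zeroMeanSobolev (r - 1)) := by
  rw [← (isClosed_range_eigenvalue hσ hμ).closure_eq, Metric.mem_closure_iff] at hz
  push Not at hz
  obtain ⟨ε, hε, hfar⟩ := hz
  obtain ⟨c, hc, hlow⟩ := exists_mul_abs_le_norm_sub_eigenvalue hσ hμ hε fun k => by
    simpa [dist_eq_norm] using hfar _ (mem_range_self k)
  exact bijOn_mul_zeroMeanSobolev hc hlow (norm_sub_eigenvalue_le hμ z) r

lemma spectrumSet_eq_range (hσ : 0 < σ) (hμ : 0 < μ) (r : ℝ) :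
    spectrumSet σ Θ μ r = range fun k => (eigenvalue σ Θ μ k : ℂ) := by
  refine Subset.antisymm (fun z hz => ?_) ?_
  · by_contra hz'
    exact hz (bijOn_resolventMap hσ hμ hz' r)
  · rintro _ ⟨k, rfl⟩ hbij
    exact not_injOn_mul_zeroMeanSobolev (sub_self _) r hbij.injOn

lemma range_eigenvalue_eq :
    (range fun k => (eigenvalue σ Θ μ k : ℂ)) =
      {z | ∃ n : ℕ, 1 ≤ n ∧ z = ((-decayRate σ Θ μ n : ℝ) : ℂ)} := by
  ext z
  constructor
  · rintro ⟨k, rfl⟩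
    refine ⟨k.1.natAbs, Int.natAbs_pos.2 k.2, ?_⟩
    dsimp only
    rw [eigenvalue_eq_neg_decayRate, Nat.cast_natAbs, Int.cast_abs]
  · rintro ⟨n, hn, rfl⟩
    refine ⟨⟨n, by omega⟩, ?_⟩
    dsimp only
    rw [eigenvalue_eq_neg_decayRate, Int.cast_natCast, Nat.abs_cast]

end spectrum

/-- The spectrum of the linearization `A` at the flat interface is the closure of the set
`{-(σk² + Θ)/(4μk) : k ∈ ℕ, k ≥ 1}`; moreover, if `σ + Θ > 0`, then every spectral value
has real part at most `-ϑ₀`. -/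
theorem spectrum_of_flat_linearization (σ Θ μ r : ℝ) (hσ : 0 < σ) (hμ : 0 < μ) :
    spectrumSet σ Θ μ r =
      closure {z : ℂ | ∃ k : ℕ, 1 ≤ k ∧
        z = ((-((σ * (k : ℝ) ^ 2 + Θ) / (4 * μ * (k : ℝ))) : ℝ) : ℂ)} ∧
    (0 < σ + Θ →
      ∀ z ∈ spectrumSet σ Θ μ r,
        z.re ≤ -(if Θ ≤ σ then (σ + Θ) / (4 * μ) else Real.sqrt (σ * Θ) / (2 * μ))) := by
  have hspec := spectrumSet_eq_range (Θ := Θ) hσ hμ r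
  refine ⟨?_, fun _ z hz => ?_⟩
  · rw [hspec, ← (isClosed_range_eigenvalue hσ hμ).closure_eq]
    exact congrArg closure range_eigenvalue_eq
  · obtain ⟨k, rfl⟩ := hspec ▸ hz
    rw [Complex.ofReal_re, eigenvalue_eq_neg_decayRate, neg_le_neg_iff]
    exact decayThreshold_le_decayRate hσ.le hμ (one_le_abs_val_cast k)
end
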